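/- Let P = ⟨x₁,…,x_m | r₁,…,rₙ⟩ be a finite presentation in which each relator rᵢ is a freely reduced and cyclically reduced word and the rᵢ are pairwise distinct, let k ≥ 12, and let P̄_t^k denote the group presented by P_t^k = ⟨x₁,…,x_m,t | (r₁t)^k,…,(rₙt)^k, t^k⟩. Then the image of the generator t in P̄_t^k has order exactly k. -/
import Mathlib


/-- A word on an alphabet `β`: a list of letters with exponents `±1`. -/
abbrev Word (β : Type*) := List (β × Bool)

/-- A word is freely reduced if it has no subword `x x⁻¹` or `x⁻¹ x`. -/
def Reduced {β : Type*} (w : Word β) : Prop :=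
  w.Chain' fun a b => a.1 = b.1 → a.2 = b.2

/-- A word is cyclically reduced if it is freely reduced and its first letter is not the
inverse of its last letter. -/
def CyclicallyReduced {β : Type*} (w : Word β) : Prop :=
  Reduced w ∧ ∀ a ∈ w.getLast?, ∀ b ∈ w.head?, a.1 = b.1 → a.2 = b.2

/-- The element of the free group on `x₁,…,x_m,t` given by the word `rᵢ` on the `x`'s. -/
def rho {m n : ℕ} (r : Fin n → Word (Fin m)) (i : Fin n) : FreeGroup (Fin m ⊕ Unit) :=
  FreeGroup.mk ((r i).map fun l => (Sum.inl l.1, l.2))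

/-- The generator `t` of the free group on `x₁,…,x_m,t`. -/
def tGen (m : ℕ) : FreeGroup (Fin m ⊕ Unit) := FreeGroup.of (Sum.inr ())

/-- The relator set `{(r₁t)^k, …, (rₙt)^k, t^k}` of the presentation
`P_t^k = ⟨x₁,…,x_m,t | (r₁t)^k,…,(rₙt)^k, t^k⟩`. -/
def PtkRels (m n k : ℕ) (r : Fin n → Word (Fin m)) : Set (FreeGroup (Fin m ⊕ Unit)) :=
  (Set.range fun i => (rho r i * tGen m) ^ k) ∪ {tGen m ^ k}

/-- The relator set `{r₁, …, rₙ}` of the presentation `P = ⟨x₁,…,x_m | r₁,…,rₙ⟩`. -/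
def PRels (m n : ℕ) (r : Fin n → Word (Fin m)) : Set (FreeGroup (Fin m)) :=
  Set.range fun i => FreeGroup.mk (r i)

lemma zmod_pow_k (k : ℕ) (g : Multiplicative (ZMod k)) : g ^ k = 1 := by
  have h : k • g.toAdd = 0 := by
    rw [nsmul_eq_mul]; simp
  rw [← ofAdd_toAdd g, ← ofAdd_nsmul, h, ofAdd_zero]

/-- For `P = ⟨x₁,…,x_m | r₁,…,rₙ⟩` with all relators freely reduced, cyclically reduced
and distinct, and `k ≥ 12`, the image of the generator `t` in the group presented by
`P_t^k = ⟨x₁,…,x_m,t | (r₁t)^k,…,(rₙt)^k, t^k⟩` has order exactly `k`. -/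
theorem ptk_orderOf_t {m n k : ℕ} (hk : 12 ≤ k) (r : Fin n → Word (Fin m))
    (hred : ∀ i, Reduced (r i)) (hcyc : ∀ i, CyclicallyReduced (r i))
    (hdist : Function.Injective r) :
    orderOf (PresentedGroup.of (Sum.inr ()) :
      PresentedGroup (PtkRels m n k r)) = k := by
  set G := Multiplicative (ZMod k)
  set f : Fin m ⊕ Unit → G := Sum.elim (fun _ => 1) (fun _ => Multiplicative.ofAdd 1)
  have hrel : ∀ ρ ∈ PtkRels m n k r, FreeGroup.lift f ρ = 1 := by
    rintro ρ (⟨i, rfl⟩ | rfl)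
    · rw [map_pow]; exact zmod_pow_k k _
    · rw [map_pow]; exact zmod_pow_k k _
  have φ := PresentedGroup.toGroup hrel
  have hφt : (PresentedGroup.toGroup hrel) (PresentedGroup.of (Sum.inr ())) =
      Multiplicative.ofAdd (1 : ZMod k) := by
    rw [PresentedGroup.toGroup.of]; rfl
  have h1 : (PresentedGroup.of (Sum.inr ()) : PresentedGroup (PtkRels m n k r)) ^ k = 1 := by
    have hmem : tGen m ^ k ∈ PtkRels m n k r := Or.inr rfl
    have : (PresentedGroup.mk (PtkRels m n k r) (tGen m ^ k) : PresentedGroup _) = 1 := by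
      rw [PresentedGroup.mk]
      exact (QuotientGroup.eq_one_iff _).2 (Subgroup.subset_normalClosure hmem)
    simpa [map_pow, tGen, PresentedGroup.of] using this
  have hdvd1 : orderOf (PresentedGroup.of (Sum.inr ()) :
      PresentedGroup (PtkRels m n k r)) ∣ k := orderOf_dvd_of_pow_eq_one h1
  have hdvd2 : k ∣ orderOf (PresentedGroup.of (Sum.inr ()) :
      PresentedGroup (PtkRels m n k r)) := by
    have := orderOf_map_dvd (PresentedGroup.toGroup hrel)
      (PresentedGroup.of (Sum.inr ()) : PresentedGroup (PtkRels m n k r))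
    rw [hφt] at this
    have ho : orderOf (Multiplicative.ofAdd (1 : ZMod k)) = k := by
      rw [orderOf_ofAdd_eq_addOrderOf]
      exact ZMod.addOrderOf_one k
    rwa [ho] at this
  exact Nat.dvd_antisymm hdvd1 hdvd2
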